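/- Let k be a field, n ≥ 2, and d ≥ 1. For each i with 1 ≤ i ≤ n, the polynomial obtained from t₀x₀^d + ⋯ + tₙxₙ^d by setting t_i = 0, namely t₀x₀^d + ⋯ + t_{i-1}x_{i-1}^d + t_{i+1}x_{i+1}^d + ⋯ + tₙxₙ^d, is irreducible over the field k(t₀,…,t_{i-1},t_{i+1},…,tₙ) generated by the remaining coefficients (viewed as independent transcendentals), regarded as a polynomial in x₀,…,xₙ. -/

import Mathlib

/-!
Fix `a ≠ i` and write the polynomial as `t_a x_a^d + q` with `q = ∑_{j ≠ a, i} t_j x_j^d`, a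
polynomial in `x_a` over `D = k[t][x_j : j ≠ a]`. As `n ≥ 2`, `q` contains a term `t_b x_b^d`, so it
is not divisible by the prime `t_a` of `D`. The reversal `q x_a^d + t_a` is then Eisenstein at
`t_a`, so `t_a x_a^d + q` is irreducible in `D[x_a]`. Gauss's lemma carries this to
`Frac(D)[x_a]`, and from there down to `K[x_j : j ≠ a][x_a]`, a ring between `D[x_a]` and
`Frac(D)[x_a]` over which the polynomial is still primitive because `t_a` is a unit of `K`.
-/

namespace Polynomial

theorem isPrimitive_C_mul_X_pow_add_C {R : Type*} [CommSemiring R] {a b : R} (hab : IsRelPrime a b)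
    {d : ℕ} (hd : d ≠ 0) : (C a * X ^ d + C b).IsPrimitive := fun r hr ↦ by
  rw [C_dvd_iff_dvd_coeff] at hr
  exact hab (by simpa [coeff_C, hd] using hr d) (by simpa [coeff_C, Ne.symm hd] using hr 0)

section Domain

variable {B : Type*} [CommRing B] [IsDomain B]

theorem isUnit_of_isUnit_reverse {p : B[X]} (h0 : p.coeff 0 ≠ 0) (h : IsUnit p.reverse) :
    IsUnit p := by
  have hdeg : p.natDegree = 0 := by
    simpa [reverse_natDegree, natTrailingDegree_eq_zero.mpr (Or.inr h0)] using
      natDegree_eq_zero_of_isUnit h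
  rw [eq_C_of_natDegree_eq_zero hdeg] at h ⊢
  rwa [reverse_C] at h

theorem irreducible_of_irreducible_reverse {p : B[X]} (h0 : p.coeff 0 ≠ 0)
    (h : Irreducible p.reverse) : Irreducible p where
  not_isUnit hp := h.not_isUnit <| by
    rwa [eq_C_of_natDegree_eq_zero (natDegree_eq_zero_of_isUnit hp), reverse_C,
      ← eq_C_of_natDegree_eq_zero (natDegree_eq_zero_of_isUnit hp)]
  isUnit_or_isUnit a b hab := by
    rw [hab, mul_coeff_zero] at h0
    rw [hab, reverse_mul_of_domain] at h
    exact (h.isUnit_or_isUnit rfl).imp (isUnit_of_isUnit_reverse (left_ne_zero_of_mul h0))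
      (isUnit_of_isUnit_reverse (right_ne_zero_of_mul h0))

/-- Eisenstein's criterion at `π`, applied to the reversed polynomial `C q * X ^ d + C π`. -/
theorem irreducible_C_mul_X_pow_add_C_of_prime {π q : B} (hπ : Prime π) (hq : ¬π ∣ q) {d : ℕ}
    (hd : d ≠ 0) : Irreducible (C π * X ^ d + C q) := by
  have hq0 : q ≠ 0 := fun h ↦ hq (h ▸ dvd_zero π)
  have hrel : IsRelPrime π q := hπ.irreducible.isRelPrime_iff_not_dvd.mpr hq
  refine irreducible_of_irreducible_reverse (by simpa [coeff_C, Ne.symm hd] using hq0) ?_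
  have hrev : (C π * X ^ d + C q).reverse = C q * X ^ d + C π := by
    rw [reverse_add_C, reverse_mul_X_pow, reverse_C, natDegree_C_mul_X_pow d π hπ.ne_zero,
      add_comm]
  have hdeg : (C q * X ^ d + C π).degree = (d : WithBot ℕ) := by
    have hlead : (C q * X ^ d).degree = (d : WithBot ℕ) := degree_C_mul_X_pow d hq0
    rw [degree_add_C (by rw [hlead]; exact_mod_cast Nat.pos_of_ne_zero hd), hlead]
  have hcoeff_zero : (C q * X ^ d + C π).coeff 0 = π := by simp [coeff_C, Ne.symm hd]
  rw [hrev]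
  refine irreducible_of_eisenstein_criterion (P := Ideal.span {π})
    ((Ideal.span_singleton_prime hπ.ne_zero).mpr hπ) ?_ ?_ ?_ ?_
    (isPrimitive_C_mul_X_pow_add_C hrel.symm hd)
  · rw [leadingCoeff, natDegree_eq_of_degree_eq_some hdeg, Ideal.mem_span_singleton]
    simpa [coeff_C, hd] using hq
  · intro n hn
    rw [hdeg, Nat.cast_lt] at hn
    rw [Ideal.mem_span_singleton, coeff_add, coeff_C_mul_X_pow, if_neg hn.ne, zero_add, coeff_C]
    split_ifs <;> simp
  · rw [hdeg]
    exact_mod_cast Nat.pos_of_ne_zero hd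
  · rw [Ideal.span_singleton_pow, Ideal.mem_span_singleton, hcoeff_zero, pow_two]
    nth_rw 3 [← mul_one π]
    rw [mul_dvd_mul_iff_left hπ.ne_zero]
    exact hπ.not_dvd_one

end Domain

theorem IsPrimitive.irreducible_map_of_isLocalization {R S : Type*} [CommRing R] [IsDomain R]
    [IsGCDMonoid R] [CommRing S] [IsDomain S] [Algebra R S] {M : Submonoid R}
    (hM : M ≤ nonZeroDivisors R) [IsLocalization M S] {p : R[X]} (hp : p.IsPrimitive)
    (hp' : (p.map (algebraMap R S)).IsPrimitive) (h : Irreducible p) :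
    Irreducible (p.map (algebraMap R S)) := by
  let F := FractionRing R
  have hunit : ∀ m : M, IsUnit (algebraMap R F m) := fun m ↦
    IsLocalization.map_units F (⟨m, hM m.2⟩ : nonZeroDivisors R)
  have hinj : Function.Injective (IsLocalization.lift hunit : S →+* F) :=
    (IsLocalization.lift_injective_iff hunit).mpr fun x y ↦ by
      rw [(IsLocalization.injective S hM).eq_iff, (IsFractionRing.injective R F).eq_iff]
  refine hp'.irreducible_of_irreducible_map_of_injective hinj ?_
  rw [map_map, IsLocalization.lift_comp]
  exact hp.irreducible_iff_irreducible_map_fraction_map.mp h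

attribute [local instance] MvPolynomial.algebraMvPolynomial in
theorem irreducible_C_mul_X_pow_add_C_mvPolynomialMap_of_prime {A K τ : Type*} [CommRing A]
    [IsDomain A] [UniqueFactorizationMonoid A] [Field K] [Algebra A K] [IsFractionRing A K]
    {π : A} (hπ : Prime π) {q : MvPolynomial τ A} (hq : ¬MvPolynomial.C π ∣ q) {d : ℕ}
    (hd : d ≠ 0) :
    Irreducible (C (MvPolynomial.C (algebraMap A K π)) * X ^ d +
      C (MvPolynomial.map (algebraMap A K) q)) := by
  have hπ' : Prime (MvPolynomial.C π : MvPolynomial τ A) := (MvPolynomial.prime_C_iff τ).mpr hπ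
  have hM : (nonZeroDivisors A).map (MvPolynomial.C (σ := τ)) ≤ nonZeroDivisors _ := by
    rintro _ ⟨a, ha, rfl⟩
    exact mem_nonZeroDivisors_of_ne_zero
      (MvPolynomial.C_ne_zero.mpr (nonZeroDivisors.ne_zero ha))
  have hunit : IsUnit (MvPolynomial.C (algebraMap A K π) : MvPolynomial τ K) :=
    (isUnit_iff_ne_zero.mpr ((map_ne_zero_iff _ (IsFractionRing.injective A K)).mpr
      hπ.ne_zero)).map MvPolynomial.C
  have hmap : (C (MvPolynomial.C π) * X ^ d + C q).map (algebraMap (MvPolynomial τ A) _) =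
      C (MvPolynomial.C (algebraMap A K π)) * X ^ d + C (MvPolynomial.map (algebraMap A K) q) := by
    simp only [Polynomial.map_add, Polynomial.map_mul, Polynomial.map_pow, map_C, map_X,
      MvPolynomial.algebraMap_def, MvPolynomial.map_C]
  rw [← hmap]
  refine IsPrimitive.irreducible_map_of_isLocalization hM
    (isPrimitive_C_mul_X_pow_add_C (hπ'.irreducible.isRelPrime_iff_not_dvd.mpr hq) hd) ?_
    (irreducible_C_mul_X_pow_add_C_of_prime hπ' hq hd)
  rw [hmap]
  exact isPrimitive_C_mul_X_pow_add_C hunit.isRelPrime_left hd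

end Polynomial

namespace MvPolynomial

section EquivPolynomialSubtypeNe

variable (R : Type*) [CommSemiring R] {σ : Type*} [DecidableEq σ] (s₀ : σ)

noncomputable def equivPolynomialSubtypeNe :
    MvPolynomial σ R ≃ₐ[R] Polynomial (MvPolynomial {s // s ≠ s₀} R) :=
  (renameEquiv R (Equiv.optionSubtypeNe s₀)).symm.trans (optionEquivLeft R _)

@[simp]
theorem equivPolynomialSubtypeNe_X_self :
    equivPolynomialSubtypeNe R s₀ (X s₀) = Polynomial.X := by
  simp [equivPolynomialSubtypeNe]

theorem equivPolynomialSubtypeNe_X_of_ne {s : σ} (hs : s ≠ s₀) :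
    equivPolynomialSubtypeNe R s₀ (X s) = Polynomial.C (X ⟨s, hs⟩) := by
  simp [equivPolynomialSubtypeNe, Equiv.optionSubtypeNe_symm_of_ne hs]

@[simp]
theorem equivPolynomialSubtypeNe_C (r : R) :
    equivPolynomialSubtypeNe R s₀ (C r) = Polynomial.C (C r) := by
  simp [equivPolynomialSubtypeNe]

end EquivPolynomialSubtypeNe

theorem irreducible_sum_C_X_mul_X_pow {ι σ : Type*} [Fintype ι] [Nontrivial ι] (k : Type*)
    [Field k] (e : ι ↪ σ) {d : ℕ} (hd : d ≠ 0) :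
    Irreducible (∑ j : ι, C (algebraMap (MvPolynomial ι k) (FractionRing (MvPolynomial ι k)) (X j))
      * X (e j) ^ d : MvPolynomial σ (FractionRing (MvPolynomial ι k))) := by
  classical
  obtain ⟨j₀, j₁, hj⟩ := exists_pair_ne ι
  let q : MvPolynomial {s // s ≠ e j₀} (MvPolynomial ι k) :=
    ∑ j : {j // j ≠ j₀}, C (X (j : ι)) * X ⟨e j, e.injective.ne j.2⟩ ^ d
  have hq : ¬C (X j₀) ∣ q := by
    have hcoeff : coeff (Finsupp.single ⟨e j₁, e.injective.ne hj.symm⟩ d) q = X j₁ := by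
      simp only [q, coeff_sum, C_mul_X_pow_eq_monomial, coeff_monomial]
      rw [Finset.sum_eq_single ⟨j₁, hj.symm⟩ _ (by simp), if_pos rfl]
      intro j _ hj'
      refine if_neg fun h ↦ hj' (Subtype.ext (e.injective ?_))
      exact congrArg Subtype.val (Finsupp.single_left_injective hd h)
    rw [C_dvd_iff_dvd_coeff]
    intro h
    exact hj (X_dvd_X.mp (hcoeff ▸ h _))
  rw [← MulEquiv.irreducible_iff (equivPolynomialSubtypeNe _ (e j₀))]
  convert Polynomial.irreducible_C_mul_X_pow_add_C_mvPolynomialMap_of_prime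
    (K := FractionRing (MvPolynomial ι k)) (X_prime (i := j₀)) hq hd using 1
  rw [Fintype.sum_eq_add_sum_subtype_ne _ j₀, map_add, map_sum]
  simp only [map_mul, map_pow, map_sum, map_C, map_X, equivPolynomialSubtypeNe_C,
    equivPolynomialSubtypeNe_X_self, q]
  refine congrArg (_ + ·) (Finset.sum_congr rfl fun j _ ↦ ?_)
  rw [equivPolynomialSubtypeNe_X_of_ne _ _ (e.injective.ne j.2)]

end MvPolynomial

open MvPolynomial

theorem stmt_8_general (k : Type) [Field k] (n d : ℕ) (hn : 2 ≤ n) (hd : 1 ≤ d)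
    (i : Fin (n + 1)) :
    Irreducible
      ((∑ j : {j : Fin (n + 1) // j ≠ i},
          C (algebraMap (MvPolynomial {j : Fin (n + 1) // j ≠ i} k)
              (FractionRing (MvPolynomial {j : Fin (n + 1) // j ≠ i} k)) (X j))
            * X (j : Fin (n + 1)) ^ d :
        MvPolynomial (Fin (n + 1))
          (FractionRing (MvPolynomial {j : Fin (n + 1) // j ≠ i} k)))) := by
  have : Nontrivial {j : Fin (n + 1) // j ≠ i} := by
    rw [← Fintype.one_lt_card_iff_nontrivial]
    simp only [ne_eq, Fintype.card_subtype_compl, Fintype.card_fin, Fintype.card_unique]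
    omega
  exact irreducible_sum_C_X_mul_X_pow k (Function.Embedding.subtype _) (by omega)

/-- The polynomial `∑_{j ≠ i} t_j x_j^d` obtained from `t₀x₀^d + ⋯ + tₙxₙ^d` by setting
`t_i = 0` (for `1 ≤ i ≤ n`, i.e. `i ≠ 0`) is irreducible over the field generated by the
remaining coefficients `t_j` (`j ≠ i`), viewed as independent transcendentals; this
expresses integrality of the fibres of `f : X → Π₂` at codimension-1 points `t_i = 0`. -/
theorem stmt_8 (k : Type) [Field k] (n d : ℕ) (hn : 2 ≤ n) (hd : 1 ≤ d)
    (i : Fin (n + 1)) (hi : i ≠ 0) :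
    Irreducible
      ((∑ j : {j : Fin (n + 1) // j ≠ i},
          C (algebraMap (MvPolynomial {j : Fin (n + 1) // j ≠ i} k)
              (FractionRing (MvPolynomial {j : Fin (n + 1) // j ≠ i} k)) (X j))
            * X (j : Fin (n + 1)) ^ d :
        MvPolynomial (Fin (n + 1))
          (FractionRing (MvPolynomial {j : Fin (n + 1) // j ≠ i} k)))) :=
  stmt_8_general k n d hn hd i
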